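/- arXiv:2102.08174 — 3 statements merged into one kernel-verified Lean document; each statement's English description precedes it below -/
import Mathlib

section
/- Let Ω be a finite nonempty probability space, z : Ω → Bool an instrument, and for each ω two potential treatments x₀(ω), x₁(ω) ∈ {0,1} and potential outcomes y₀(ω), y₁(ω) ∈ ℝ, with observed treatment x(ω) = x_{z(ω)}(ω) and observed outcome y(ω) = y₀(ω) + (y₁(ω) - y₀(ω))·x(ω). Assume z is independent of (x₀, x₁, y₀, y₁), monotonicity x₁(ω) ≥ x₀(ω) for all ω (no defiers), and that the set of compliers {ω : x₁(ω) = 1 ∧ x₀(ω) = 0} has positive probability. Then (E[y|z=1] - E[y|z=0]) / (E[x|z=1] - E[x|z=0]) = E[y₁ - y₀ | x₁ = 1 ∧ x₀ = 0], i.e., the Wald estimator equals the local average treatment effect on compliers. -/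
/-! Independence of the instrument lets one drop the conditioning on `z = b` for any function of
`(x₀, x₁, y₀, y₁)`, so the Wald numerator and denominator become `E[(y₁ - y₀)(x₁ - x₀)]` and
`E[x₁ - x₀]`. With 0/1 treatments and no defiers, `x₁ - x₀` is the indicator of the compliers. -/

open scoped Classical

noncomputable section

variable {Ω : Type*} [Fintype Ω]

/-- Expectation on a finite probability space. -/
def expec (P f : Ω → ℝ) : ℝ := ∑ ω, P ω * f ω

/-- Probability of an event. -/
def pr (P : Ω → ℝ) (s : Ω → Prop) : ℝ := ∑ ω, if s ω then P ω else 0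

/-- Conditional expectation given an event. -/
def condExp (P f : Ω → ℝ) (s : Ω → Prop) : ℝ :=
  (∑ ω, if s ω then P ω * f ω else 0) / pr P s

section Expectation

variable (P : Ω → ℝ) {s : Ω → Prop} [DecidablePred s]

lemma expec_sub (f g : Ω → ℝ) : expec P f - expec P g = expec P (fun ω => f ω - g ω) := by
  simp only [expec, ← Finset.sum_sub_distrib, mul_sub]

lemma expec_indicator_mul (f : Ω → ℝ) :
    expec P (fun ω => (if s ω then 1 else 0) * f ω) = ∑ ω, if s ω then P ω * f ω else 0 := by
  simp only [expec, ite_mul, one_mul, zero_mul, mul_ite, mul_zero]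

lemma pr_eq_expec_indicator : pr P s = expec P (fun ω => if s ω then 1 else 0) := by
  simp only [pr, expec, mul_ite, mul_one, mul_zero]
  congr!

lemma condExp_eq_expec_div (f : Ω → ℝ) :
    condExp P f s = expec P (fun ω => (if s ω then 1 else 0) * f ω) / pr P s := by
  rw [expec_indicator_mul, condExp]
  congr!

lemma condExp_congr {f g : Ω → ℝ} (hfg : ∀ ω, s ω → f ω = g ω) :
    condExp P f s = condExp P g s := by
  rw [condExp_eq_expec_div, condExp_eq_expec_div]
  congr 2 with ω
  by_cases h : s ω <;> simp [h, hfg]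

variable {P}

lemma condExp_eq_expec_of_indep {f : Ω → ℝ} (hs : pr P s ≠ 0)
    (hindep : expec P (fun ω => (if s ω then 1 else 0) * f ω)
      = expec P (fun ω => if s ω then 1 else 0) * expec P f) :
    condExp P f s = expec P f := by
  rw [condExp_eq_expec_div, hindep, ← pr_eq_expec_indicator, mul_div_cancel_left₀ _ hs]

lemma indep_not_of_indep {f : Ω → ℝ} (hP : ∑ ω, P ω = 1)
    (hindep : expec P (fun ω => (if s ω then 1 else 0) * f ω)
      = expec P (fun ω => if s ω then 1 else 0) * expec P f) :
    expec P (fun ω => (if ¬ s ω then 1 else 0) * f ω)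
      = expec P (fun ω => if ¬ s ω then 1 else 0) * expec P f := by
  have hsplit (g : Ω → ℝ) : expec P (fun ω => (if ¬ s ω then 1 else 0) * g ω)
      = expec P g - expec P (fun ω => (if s ω then 1 else 0) * g ω) := by
    rw [expec_sub]
    congr 1 with ω
    split_ifs <;> ring
  have hone : expec P (fun _ => 1) = 1 := by simpa [expec] using hP
  have hsplit_one := hsplit fun _ => 1
  simp only [mul_one] at hsplit_one
  rw [hsplit, hindep, hsplit_one, hone]
  ring

end Expectation

lemma natCast_sub_natCast_eq_ite {a b : ℕ} (hab : a ≤ b) (hb : b ≤ 1) :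
    (b : ℝ) - a = if b = 1 ∧ a = 0 then 1 else 0 := by
  interval_cases b <;> interval_cases a <;> simp

theorem wald_eq_late_general
    (P : Ω → ℝ) (hPsum : ∑ ω, P ω = 1)
    (z : Ω → Bool) (x0 x1 : Ω → ℕ) (y0 y1 : Ω → ℝ)
    (hx1le : ∀ ω, x1 ω ≤ 1)
    (x : Ω → ℕ) (hx : ∀ ω, x ω = if z ω then x1 ω else x0 ω)
    (y : Ω → ℝ) (hy : ∀ ω, y ω = y0 ω + (y1 ω - y0 ω) * (x ω : ℝ))
    (hindep : ∀ g : ℕ → ℕ → ℝ → ℝ → ℝ,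
      expec P (fun ω => (if z ω then (1 : ℝ) else 0) * g (x0 ω) (x1 ω) (y0 ω) (y1 ω))
        = expec P (fun ω => if z ω then (1 : ℝ) else 0)
            * expec P (fun ω => g (x0 ω) (x1 ω) (y0 ω) (y1 ω)))
    (hmono : ∀ ω, x0 ω ≤ x1 ω)
    (hz1 : 0 < pr P (fun ω => z ω = true))
    (hz0 : 0 < pr P (fun ω => z ω = false)) :
    (condExp P y (fun ω => z ω = true) - condExp P y (fun ω => z ω = false))
        / (condExp P (fun ω => (x ω : ℝ)) (fun ω => z ω = true)
            - condExp P (fun ω => (x ω : ℝ)) (fun ω => z ω = false))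
      = condExp P (fun ω => y1 ω - y0 ω) (fun ω => x1 ω = 1 ∧ x0 ω = 0) := by
  have hfalse : (fun ω => z ω = false) = fun ω => ¬ z ω = true := by simp
  rw [hfalse] at hz0 ⊢
  have hcond_true (g : ℕ → ℕ → ℝ → ℝ → ℝ) :=
    condExp_eq_expec_of_indep hz1.ne' (hindep g)
  have hcond_false (g : ℕ → ℕ → ℝ → ℝ → ℝ) :=
    condExp_eq_expec_of_indep hz0.ne' (indep_not_of_indep hPsum (hindep g))
  have hy_true : condExp P y (fun ω => z ω = true)
      = expec P (fun ω => y0 ω + (y1 ω - y0 ω) * x1 ω) :=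
    (condExp_congr P fun ω h => by simp [hy, hx, h]).trans
      (hcond_true fun _ b c d => c + (d - c) * b)
  have hy_false : condExp P y (fun ω => ¬ z ω = true)
      = expec P (fun ω => y0 ω + (y1 ω - y0 ω) * x0 ω) :=
    (condExp_congr P fun ω h => by simp [hy, hx, h]).trans
      (hcond_false fun a _ c d => c + (d - c) * a)
  have hx_true : condExp P (fun ω => (x ω : ℝ)) (fun ω => z ω = true)
      = expec P (fun ω => (x1 ω : ℝ)) :=
    (condExp_congr P fun ω h => by simp [hx, h]).trans (hcond_true fun _ b _ _ => b)
  have hx_false : condExp P (fun ω => (x ω : ℝ)) (fun ω => ¬ z ω = true)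
      = expec P (fun ω => (x0 ω : ℝ)) :=
    (condExp_congr P fun ω h => by simp [hx, h]).trans (hcond_false fun a _ _ _ => a)
  have hcomplier (ω : Ω) : (x1 ω : ℝ) - x0 ω = if x1 ω = 1 ∧ x0 ω = 0 then 1 else 0 :=
    natCast_sub_natCast_eq_ite (hmono ω) (hx1le ω)
  rw [hy_true, hy_false, hx_true, hx_false, expec_sub, expec_sub, condExp_eq_expec_div,
    pr_eq_expec_indicator]
  congr 1 <;> congr 1 with ω
  · rw [← hcomplier]
    ring
  · exact hcomplier ω

/-- the Wald estimator equals the local average treatment effect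
on compliers (LATE theorem). -/
theorem wald_eq_late
    (P : Ω → ℝ) (hP : ∀ ω, 0 ≤ P ω) (hPsum : ∑ ω, P ω = 1)
    (z : Ω → Bool) (x0 x1 : Ω → ℕ) (y0 y1 : Ω → ℝ)
    (hx0le : ∀ ω, x0 ω ≤ 1) (hx1le : ∀ ω, x1 ω ≤ 1)
    (x : Ω → ℕ) (hx : ∀ ω, x ω = if z ω then x1 ω else x0 ω)
    (y : Ω → ℝ) (hy : ∀ ω, y ω = y0 ω + (y1 ω - y0 ω) * (x ω : ℝ))
    (hindep : ∀ g : ℕ → ℕ → ℝ → ℝ → ℝ,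
      expec P (fun ω => (if z ω then (1 : ℝ) else 0) * g (x0 ω) (x1 ω) (y0 ω) (y1 ω))
        = expec P (fun ω => if z ω then (1 : ℝ) else 0)
            * expec P (fun ω => g (x0 ω) (x1 ω) (y0 ω) (y1 ω)))
    (hmono : ∀ ω, x0 ω ≤ x1 ω)
    (hz1 : 0 < pr P (fun ω => z ω = true))
    (hz0 : 0 < pr P (fun ω => z ω = false))
    (hcompl : 0 < pr P (fun ω => x1 ω = 1 ∧ x0 ω = 0)) :
    (condExp P y (fun ω => z ω = true) - condExp P y (fun ω => z ω = false))
        / (condExp P (fun ω => (x ω : ℝ)) (fun ω => z ω = true)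
            - condExp P (fun ω => (x ω : ℝ)) (fun ω => z ω = false))
      = condExp P (fun ω => y1 ω - y0 ω) (fun ω => x1 ω = 1 ∧ x0 ω = 0) :=
  wald_eq_late_general P hPsum z x0 x1 y0 y1 hx1le x hx y hy hindep hmono hz1 hz0
end
end

section
/- In the heterogeneous persistence model with binary treatment, where units have effect β₁ with probability π₁ and β₂ with probability π₂ = 1 − π₁, and transition probabilities Pr(x_t = 0 | x_{t−h} = 0) = p_i and Pr(x_t = 1 | x_{t−h} = 1) = q_i for type i, the Wald estimator (E(y_t|x_{t−h}=1) − E(y_t|x_{t−h}=0)) / (E(x_t|x_{t−h}=1) − E(x_t|x_{t−h}=0)) equals (Σ_{i=1,2} π_i β_i (p_i + q_i − 1)) / (Σ_{i=1,2} π_i (p_i + q_i − 1)), provided the denominator Σ_i π_i (p_i + q_i − 1) is nonzero. -/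
/-!
Conditioning on `x_{t-h} = a` and using that the type is independent of `x_{t-h}`, the
conditional mean of `g(τ) · x_t` is `Σ_i π_i g(i) r_i(a)`, with `r_i(1) = q_i` and
`r_i(0) = 1 - p_i`. Taking the difference in `a` for `g = β` and for `g = 1` gives numerator
`Σ_i π_i β_i (p_i + q_i - 1)` and denominator `Σ_i π_i (p_i + q_i - 1)` of the Wald ratio.
-/

open scoped Classical

noncomputable section

variable {Ω : Type*} [Fintype Ω]

section

variable {ι : Type*} [Fintype ι] (P : Ω → ℝ) (s : Ω → Prop) (τ : Ω → ι) (t : Ω → Bool)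

theorem sum_ite_mul_indicator_eq_sum_pr (g : ι → ℝ) :
    (∑ ω, if s ω then P ω * (g (τ ω) * if t ω then 1 else 0) else 0)
      = ∑ i, g i * pr P (fun ω => t ω = true ∧ s ω ∧ τ ω = i) := by
  unfold pr
  simp_rw [Finset.mul_sum]
  rw [Finset.sum_comm]
  refine Finset.sum_congr rfl fun ω _ => ?_
  by_cases hs : s ω <;> by_cases ht : t ω <;> simp [hs, ht, mul_comm]

theorem condExp_mul_indicator_eq_sum {f : Ω → ℝ} {g r π : ι → ℝ}
    (hf : ∀ ω, f ω = g (τ ω) * if t ω then 1 else 0)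
    (hrate : ∀ i, pr P (fun ω => t ω = true ∧ s ω ∧ τ ω = i)
      = r i * pr P (fun ω => s ω ∧ τ ω = i))
    (hindep : ∀ i, pr P (fun ω => s ω ∧ τ ω = i) = pr P s * π i)
    (hs : pr P s ≠ 0) :
    condExp P f s = ∑ i, g i * r i * π i := by
  rw [condExp, funext hf, sum_ite_mul_indicator_eq_sum_pr, Finset.sum_div]
  refine Finset.sum_congr rfl fun i _ => ?_
  rw [hrate, hindep]
  field_simp

end

theorem wald_heterogeneous_persistence_general
    (P : Ω → ℝ)
    (τ : Ω → Bool)                         -- type of the unit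
    (xh xt : Ω → Bool)                     -- historical and current treatment
    (β p q : Bool → ℝ) (π : Bool → ℝ)
    (hπ : ∀ i, π i = pr P (fun ω => τ ω = i))
    -- historical treatment is independent of type
    (hindep : ∀ a i, pr P (fun ω => xh ω = a ∧ τ ω = i)
        = pr P (fun ω => xh ω = a) * pr P (fun ω => τ ω = i))
    -- Markov transitions: Pr(x_t = 0 | x_{t-h} = 0, type i) = pᵢ,
    -- Pr(x_t = 1 | x_{t-h} = 1, type i) = qᵢ
    (htrans0 : ∀ i, pr P (fun ω => xt ω = true ∧ xh ω = false ∧ τ ω = i)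
        = (1 - p i) * pr P (fun ω => xh ω = false ∧ τ ω = i))
    (htrans1 : ∀ i, pr P (fun ω => xt ω = true ∧ xh ω = true ∧ τ ω = i)
        = q i * pr P (fun ω => xh ω = true ∧ τ ω = i))
    (hh1 : 0 < pr P (fun ω => xh ω = true))
    (hh0 : 0 < pr P (fun ω => xh ω = false))
    (y : Ω → ℝ) (hy : ∀ ω, y ω = β (τ ω) * (if xt ω then 1 else 0)) :
    (condExp P y (fun ω => xh ω = true) - condExp P y (fun ω => xh ω = false))
        / (condExp P (fun ω => if xt ω then (1:ℝ) else 0) (fun ω => xh ω = true)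
            - condExp P (fun ω => if xt ω then (1:ℝ) else 0) (fun ω => xh ω = false))
      = (π false * β false * (p false + q false - 1)
          + π true * β true * (p true + q true - 1))
        / (π false * (p false + q false - 1) + π true * (p true + q true - 1)) := by
  have hjoint (a i : Bool) :
      pr P (fun ω => xh ω = a ∧ τ ω = i) = pr P (fun ω => xh ω = a) * π i := by
    rw [hindep, hπ]
  have hone (ω : Ω) : (if xt ω then (1:ℝ) else 0) = 1 * if xt ω then 1 else 0 :=
    (one_mul _).symm
  rw [condExp_mul_indicator_eq_sum P _ τ xt hy htrans1 (hjoint true) hh1.ne',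
    condExp_mul_indicator_eq_sum P _ τ xt hy htrans0 (hjoint false) hh0.ne',
    condExp_mul_indicator_eq_sum P _ τ xt (g := fun _ => 1) hone htrans1 (hjoint true) hh1.ne',
    condExp_mul_indicator_eq_sum P _ τ xt (g := fun _ => 1) hone htrans0 (hjoint false) hh0.ne']
  simp only [Fintype.sum_bool]
  ring

/-- heterogeneous persistence model with two types
(false = type 1, true = type 2): the Wald estimator using the historical
treatment equals Σ πᵢβᵢ(pᵢ+qᵢ−1) / Σ πᵢ(pᵢ+qᵢ−1). -/
theorem wald_heterogeneous_persistence
    (P : Ω → ℝ) (hP : ∀ ω, 0 ≤ P ω) (hPsum : ∑ ω, P ω = 1)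
    (τ : Ω → Bool)                         -- type of the unit
    (xh xt : Ω → Bool)                     -- historical and current treatment
    (β p q : Bool → ℝ) (π : Bool → ℝ)
    (hπ : ∀ i, π i = pr P (fun ω => τ ω = i))
    (hπpos : ∀ i, 0 < π i)
    (hpq : ∀ i, 0 ≤ p i ∧ p i ≤ 1 ∧ 0 ≤ q i ∧ q i ≤ 1)
    -- historical treatment is independent of type
    (hindep : ∀ a i, pr P (fun ω => xh ω = a ∧ τ ω = i)
        = pr P (fun ω => xh ω = a) * pr P (fun ω => τ ω = i))
    -- Markov transitions: Pr(x_t = 0 | x_{t-h} = 0, type i) = pᵢ,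
    -- Pr(x_t = 1 | x_{t-h} = 1, type i) = qᵢ
    (htrans0 : ∀ i, pr P (fun ω => xt ω = true ∧ xh ω = false ∧ τ ω = i)
        = (1 - p i) * pr P (fun ω => xh ω = false ∧ τ ω = i))
    (htrans1 : ∀ i, pr P (fun ω => xt ω = true ∧ xh ω = true ∧ τ ω = i)
        = q i * pr P (fun ω => xh ω = true ∧ τ ω = i))
    (hh1 : 0 < pr P (fun ω => xh ω = true))
    (hh0 : 0 < pr P (fun ω => xh ω = false))
    (y : Ω → ℝ) (hy : ∀ ω, y ω = β (τ ω) * (if xt ω then 1 else 0))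
    (hden : π false * (p false + q false - 1) + π true * (p true + q true - 1) ≠ 0) :
    (condExp P y (fun ω => xh ω = true) - condExp P y (fun ω => xh ω = false))
        / (condExp P (fun ω => if xt ω then (1:ℝ) else 0) (fun ω => xh ω = true)
            - condExp P (fun ω => if xt ω then (1:ℝ) else 0) (fun ω => xh ω = false))
      = (π false * β false * (p false + q false - 1)
          + π true * β true * (p true + q true - 1))
        / (π false * (p false + q false - 1) + π true * (p true + q true - 1)) :=
  wald_heterogeneous_persistence_general P τ xh xt β p q π hπ hindep htrans0 htrans1 hh1 hh0 y hy
end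
end

section
/- In the heterogeneous persistence model with two types, if p₁ = p₂ and q₂ > q₁ and β₂ > β₁, then the Wald estimator (Σ_i π_i β_i (p_i + q_i − 1)) / (Σ_i π_i (p_i + q_i − 1)) is strictly greater than the average treatment effect π₁β₁ + π₂β₂, provided p_i + q_i − 1 > 0 for both types. -/
/-! The Wald estimator is the mean of `β` under the weights `πᵢ aᵢ`, where `aᵢ = p + qᵢ - 1`, while
the ATE is its mean under the weights `πᵢ`. Clearing the denominator, their difference is
`Cov_π(β, a) / E_π[a]`, and for two types the covariance is `π₁ π₂ (β₂ - β₁) (a₂ - a₁) > 0`. -/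

theorem two_point_covariance_eq {π₁ π₂ : ℝ} (hπ : π₁ + π₂ = 1) (β₁ β₂ a₁ a₂ : ℝ) :
    π₁ * β₁ * a₁ + π₂ * β₂ * a₂ - (π₁ * β₁ + π₂ * β₂) * (π₁ * a₁ + π₂ * a₂) =
      π₁ * π₂ * ((β₂ - β₁) * (a₂ - a₁)) := by
  obtain rfl : π₂ = 1 - π₁ := by linarith
  ring

theorem two_point_mean_lt_tilted_mean {π₁ π₂ β₁ β₂ a₁ a₂ : ℝ}
    (hπ₁ : 0 < π₁) (hπ₂ : 0 < π₂) (hπ : π₁ + π₂ = 1) (hβ : β₁ < β₂) (ha : a₁ < a₂)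
    (hD : 0 < π₁ * a₁ + π₂ * a₂) :
    π₁ * β₁ + π₂ * β₂ < (π₁ * β₁ * a₁ + π₂ * β₂ * a₂) / (π₁ * a₁ + π₂ * a₂) := by
  rw [lt_div_iff₀ hD, ← sub_pos, two_point_covariance_eq hπ]
  exact mul_pos (mul_pos hπ₁ hπ₂) (mul_pos (sub_pos.2 hβ) (sub_pos.2 ha))

/-- With equal p's, higher persistence for the high-effect type
makes the Wald estimator exceed the ATE. -/
theorem wald_gt_ate (π₁ π₂ β₁ β₂ p q₁ q₂ : ℝ)
    (hπ1 : 0 < π₁) (hπ2 : 0 < π₂) (hπ : π₁ + π₂ = 1)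
    (hβ : β₁ < β₂) (hq : q₁ < q₂) (hpq : 0 < p + q₁ - 1) :
    π₁ * β₁ + π₂ * β₂ <
      (π₁ * β₁ * (p + q₁ - 1) + π₂ * β₂ * (p + q₂ - 1)) /
        (π₁ * (p + q₁ - 1) + π₂ * (p + q₂ - 1)) := by
  have hpq₂ : 0 < p + q₂ - 1 := by linarith
  exact two_point_mean_lt_tilted_mean hπ1 hπ2 hπ hβ (by linarith) (by positivity)
end
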